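/- arXiv:math/0603286 — 3 statements merged into one kernel-verified Lean document; each statement's English description precedes it below -/
import Mathlib

section
/- Let R be a commutative Noetherian ring and C, M finitely generated R-modules. Then M is 1-C-torsionfree if and only if there exists an injective R-homomorphism f : M → C₀ with C₀ a direct summand of a finite direct sum of copies of C such that the induced map Hom_R(f, C) : Hom_R(C₀, C) → Hom_R(M, C) is surjective. -/
open CategoryTheory

noncomputable def ExtVanishes (A : Type) [CommRing A] (i : ℕ)
    (M : Type) [AddCommGroup M] [Module A M]
    (N : Type) [AddCommGroup N] [Module A N] : Prop :=
  Subsingleton ((((Ext A (ModuleCat.{0} A) i).obj (Opposite.op (ModuleCat.of A M))).obj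
    (ModuleCat.of A N)))

noncomputable def ExtMod (A : Type) [CommRing A] (i : ℕ)
    (M : Type) [AddCommGroup M] [Module A M]
    (N : Type) [AddCommGroup N] [Module A N] : ModuleCat.{0} A :=
  ((Ext A (ModuleCat.{0} A) i).obj (Opposite.op (ModuleCat.of A M))).obj (ModuleCat.of A N)

noncomputable def evalMap (A : Type) [CommRing A]
    (C : Type) [AddCommGroup C] [Module A C]
    (M : Type) [AddCommGroup M] [Module A M] :
    M →ₗ[A] ((M →ₗ[A] C) →ₗ[A] C) :=
  LinearMap.applyₗ

/-- `M` is `n`-`C`-torsionfree. (`n = 0` imposes no condition.) -/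
noncomputable def IsCTorsionfree (A : Type) [CommRing A]
    (C : Type) [AddCommGroup C] [Module A C]
    (M : Type) [AddCommGroup M] [Module A M] : ℕ → Prop
  | 0 => True
  | 1 => Function.Injective (evalMap A C M)
  | (m + 2) => Function.Bijective (evalMap A C M) ∧
      ∀ i : ℕ, 1 ≤ i → i ≤ m → ExtVanishes A i (M →ₗ[A] C) C

/-- `C` is an `n`-semidualizing `A`-module. -/
noncomputable def IsSemidualizing (A : Type) [CommRing A]
    (C : Type) [AddCommGroup C] [Module A C] : ℕ → Prop
  | 0 => True
  | 1 => Function.Injective (LinearMap.lsmul A C) ∧ ExtVanishes A 1 C C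
  | (m + 2) => Function.Bijective (LinearMap.lsmul A C) ∧
      ∀ i : ℕ, 1 ≤ i → i ≤ m + 2 → ExtVanishes A i C C

/-- `M` is `n`-`C`-spherical: `Ext^i(M,C) = 0` for `1 ≤ i ≤ n`. -/
noncomputable def IsCSpherical (A : Type) [CommRing A]
    (C : Type) [AddCommGroup C] [Module A C]
    (M : Type) [AddCommGroup M] [Module A M] (n : ℕ) : Prop :=
  ∀ i : ℕ, 1 ≤ i → i ≤ n → ExtVanishes A i M C

/-- `X` belongs to `add C`: it is a direct summand of a finite direct sum of copies of `C`. -/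
def MemAddC (A : Type) [CommRing A]
    (C : Type) [AddCommGroup C] [Module A C]
    (X : Type) [AddCommGroup X] [Module A X] : Prop :=
  ∃ (k : ℕ) (f : X →ₗ[A] (Fin k → C)) (g : (Fin k → C) →ₗ[A] X),
    g.comp f = LinearMap.id

/-- There is an exact sequence `0 → D_m → ⋯ → D_0 → M → 0` with all `D_i ∈ add C`. -/
noncomputable def HasCResolution (A : Type) [CommRing A]
    (C : Type) [AddCommGroup C] [Module A C]
    (M : Type) [AddCommGroup M] [Module A M] (m : ℕ) : Prop :=
  ∃ (D : ℕ → ModuleCat.{0} A) (d : ∀ i : ℕ, (D (i + 1)) →ₗ[A] (D i)) (ε : (D 0) →ₗ[A] M),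
    (∀ i : ℕ, i ≤ m → MemAddC A C (D i)) ∧
    (∀ i : ℕ, m < i → Subsingleton (D i)) ∧
    Function.Surjective ε ∧ Function.Exact (d 0) ε ∧
    (∀ i : ℕ, Function.Exact (d (i + 1)) (d i))

/-- `Cdim_A M`, the `add C`-resolution dimension of `M`, as an extended natural number. -/
noncomputable def cdim (A : Type) [CommRing A]
    (C : Type) [AddCommGroup C] [Module A C]
    (M : Type) [AddCommGroup M] [Module A M] : ℕ∞ :=
  sInf ((fun m : ℕ => (m : ℕ∞)) '' {m : ℕ | HasCResolution A C M m})

/-- `K` is a first syzygy of `M`: there is a short exact sequence `0 → K → P → M → 0`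
with `P` finitely generated projective. -/
def IsFirstSyzygy (A : Type) [CommRing A] (K M : ModuleCat.{0} A) : Prop :=
  ∃ (P : ModuleCat.{0} A) (ι : K →ₗ[A] P) (ε : P →ₗ[A] M),
    Module.Finite A P ∧ Module.Projective A P ∧
    Function.Injective ι ∧ Function.Exact ι ε ∧ Function.Surjective ε

/-- `K` is an `n`-th syzygy of `M`. -/
def IsNthSyzygy (A : Type) [CommRing A] : ℕ → ModuleCat.{0} A → ModuleCat.{0} A → Prop
  | 0, K, M => Nonempty (K ≃ₗ[A] M)
  | (n + 1), K, M => ∃ L : ModuleCat.{0} A, IsFirstSyzygy A K L ∧ IsNthSyzygy A n L M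

/-- Depth of a module over a Noetherian local ring:
`inf { i | Ext^i(k, N) ≠ 0 }`, as an extended natural number. -/
noncomputable def rdepth (A : Type) [CommRing A] [IsLocalRing A]
    (N : Type) [AddCommGroup N] [Module A N] : ℕ∞ :=
  sInf ((fun i : ℕ => (i : ℕ∞)) ''
    {i : ℕ | ¬ ExtVanishes A i (IsLocalRing.ResidueField A) N})

/-- `N` has finite injective dimension over `A`: it admits a finite injective coresolution. -/
noncomputable def HasFiniteInjDim (A : Type) [CommRing A]
    (N : Type) [AddCommGroup N] [Module A N] : Prop :=
  ∃ (m : ℕ) (D : ℕ → ModuleCat.{0} A) (δ : ∀ i : ℕ, (D i) →ₗ[A] (D (i + 1)))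
    (η : N →ₗ[A] (D 0)),
    (∀ i : ℕ, i ≤ m → Module.Injective A (D i)) ∧
    (∀ i : ℕ, m < i → Subsingleton (D i)) ∧
    Function.Injective η ∧ Function.Exact η (δ 0) ∧
    (∀ i : ℕ, Function.Exact (δ i) (δ (i + 1)))

/-- `N` has finite projective dimension over `A`: it admits a finite projective resolution. -/
noncomputable def HasFiniteProjDim (A : Type) [CommRing A]
    (N : Type) [AddCommGroup N] [Module A N] : Prop :=
  ∃ (m : ℕ) (D : ℕ → ModuleCat.{0} A) (d : ∀ i : ℕ, (D (i + 1)) →ₗ[A] (D i))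
    (ε : (D 0) →ₗ[A] N),
    (∀ i : ℕ, i ≤ m → Module.Projective A (D i)) ∧
    (∀ i : ℕ, m < i → Subsingleton (D i)) ∧
    Function.Surjective ε ∧ Function.Exact (d 0) ε ∧
    (∀ i : ℕ, Function.Exact (d (i + 1)) (d i))

/-- A regular local ring: a Noetherian local ring whose maximal ideal can be generated by
(Krull dimension)-many elements. -/
def IsRegularLocal (A : Type) [CommRing A] [IsLocalRing A] : Prop :=
  IsNoetherianRing A ∧ ∃ s : Finset A,
    Ideal.span (s : Set A) = IsLocalRing.maximalIdeal A ∧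
    (s.card : WithBot ℕ∞) = ringKrullDim A

/-- `M` admits an `n`-`C`-spherical approximation: a short exact sequence `0 → Y → X → M → 0`
with `X` finitely generated `n`-`C`-spherical and `Cdim Y < n`. -/
noncomputable def HasSphericalApprox (A : Type) [CommRing A]
    (C : Type) [AddCommGroup C] [Module A C]
    (M : Type) [AddCommGroup M] [Module A M] (n : ℕ) : Prop :=
  ∃ (X Y : ModuleCat.{0} A) (ι : ↥Y →ₗ[A] ↥X) (f : ↥X →ₗ[A] M),
    Module.Finite A ↥X ∧ Module.Finite A ↥Y ∧
    Function.Injective ι ∧ Function.Exact ι f ∧ Function.Surjective f ∧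
    IsCSpherical A C ↥X n ∧ cdim A C ↥Y < (n : ℕ∞)

/-!
Being `1`-`C`-torsionfree means that the maps `M → C` separate the points of `M`.
Since `R` is Noetherian, `Hom_R(M, C)` is generated by finitely many `φ₁, …, φₙ`, and
`(φᵢ)ᵢ : M → Cⁿ` is then injective exactly when `M` is torsionfree, while every
`φ : M → C` factors through it. Conversely, an embedding of `M` into a direct summand
of `Cⁿ` lets the coordinate maps separate points.
-/

section EvalMap

variable {A : Type} [CommRing A] {C : Type} [AddCommGroup C] [Module A C]
  {M : Type} [AddCommGroup M] [Module A M]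

theorem injective_evalMap_iff :
    Function.Injective (evalMap A C M) ↔
      ∀ x : M, (∀ φ : M →ₗ[A] C, φ x = 0) → x = 0 := by
  rw [injective_iff_map_eq_zero]
  exact forall_congr' fun x => imp_congr_left LinearMap.ext_iff

theorem injective_evalMap_pi (ι : Type) : Function.Injective (evalMap A C (ι → C)) :=
  injective_evalMap_iff.2 fun _ hx => funext fun i => hx (LinearMap.proj i)

theorem injective_evalMap_of_injective {N : Type} [AddCommGroup N] [Module A N]
    {f : M →ₗ[A] N} (hf : Function.Injective f) (hN : Function.Injective (evalMap A C N)) :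
    Function.Injective (evalMap A C M) := by
  refine injective_evalMap_iff.2 fun x hx => hf ?_
  rw [map_zero]
  exact injective_evalMap_iff.1 hN (f x) fun φ => hx (φ ∘ₗ f)

theorem MemAddC.injective_evalMap (hM : MemAddC A C M) :
    Function.Injective (evalMap A C M) := by
  obtain ⟨k, f, g, hgf⟩ := hM
  have hf : Function.LeftInverse g f := LinearMap.ext_iff.1 hgf
  exact injective_evalMap_of_injective hf.injective (injective_evalMap_pi (Fin k))

variable {ι : Type*} {s : ι → M →ₗ[A] C}

theorem injective_pi_of_span_eq_top (hs : Submodule.span A (Set.range s) = ⊤)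
    (hM : Function.Injective (evalMap A C M)) : Function.Injective (LinearMap.pi s) := by
  refine (injective_iff_map_eq_zero _).2 fun x hx => injective_evalMap_iff.1 hM x fun φ => ?_
  have hx' : LinearMap.applyₗ x = (0 : (M →ₗ[A] C) →ₗ[A] C) :=
    LinearMap.ext_on_range hs fun i => congrFun hx i
  exact LinearMap.congr_fun hx' φ

theorem surjective_lcomp_pi_of_span_eq_top (hs : Submodule.span A (Set.range s) = ⊤) :
    Function.Surjective (LinearMap.lcomp A C (LinearMap.pi s)) := by
  rw [← LinearMap.range_eq_top, eq_top_iff, ← hs, Submodule.span_le]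
  rintro _ ⟨i, rfl⟩
  exact ⟨LinearMap.proj i, rfl⟩

end EvalMap

/-- A finitely generated module `M` is `1`-`C`-torsionfree iff it admits an injective left
`add C`-approximation, i.e. an injective map `f : M → C₀` with `C₀ ∈ add C` such that
`Hom_R(f, C)` is surjective. -/
theorem statement3 (R : Type) [CommRing R] [IsNoetherianRing R]
    (C : Type) [AddCommGroup C] [Module R C] [Module.Finite R C]
    (M : Type) [AddCommGroup M] [Module R M] [Module.Finite R M] :
    IsCTorsionfree R C M 1 ↔
      ∃ (C₀ : ModuleCat.{0} R) (f : M →ₗ[R] ↥C₀),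
        MemAddC R C ↥C₀ ∧ Function.Injective f ∧
        Function.Surjective (LinearMap.lcomp R C f) := by
  refine ⟨fun hM => ?_, fun ⟨_, _, hC₀, hf, _⟩ =>
    injective_evalMap_of_injective hf hC₀.injective_evalMap⟩
  obtain ⟨n, s, hs⟩ := Module.Finite.exists_fin (R := R) (M := M →ₗ[R] C)
  exact ⟨ModuleCat.of R (Fin n → C), LinearMap.pi s, ⟨n, .id, .id, rfl⟩,
    injective_pi_of_span_eq_top hs hM, surjective_lcomp_pi_of_span_eq_top hs⟩
end

section
/- Let R be a commutative Noetherian ring and C a finitely generated R-module such that the homothety map λ_R : R → Hom_R(C,C) is injective (i.e., R is 1-C-torsionfree). Then for every finitely generated R-module M and every short exact sequence 0 → K → P → M → 0 with P finitely generated projective, the evaluation map λ_K : K → Hom_R(Hom_R(K,C), C) is injective; that is, every first syzygy of M is 1-C-torsionfree. -/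
open CategoryTheory

/-- If the homothety map `λ_R : R → Hom_R(C,C)` is injective (`R` is `1`-`C`-torsionfree),
then every first syzygy of every finitely generated `R`-module is `1`-`C`-torsionfree. -/
theorem statement6 (R : Type) [CommRing R] [IsNoetherianRing R]
    (C : Type) [AddCommGroup C] [Module R C] [Module.Finite R C]
    (hR : Function.Injective (LinearMap.lsmul R C))
    (M : Type) [AddCommGroup M] [Module R M] [Module.Finite R M]
    (K : Type) [AddCommGroup K] [Module R K]
    (P : Type) [AddCommGroup P] [Module R P] [Module.Finite R P] [Module.Projective R P]
    (ι : K →ₗ[R] P) (ε : P →ₗ[R] M)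
    (hι : Function.Injective ι) (hexact : Function.Exact ι ε)
    (hε : Function.Surjective ε) :
    Function.Injective (evalMap R C K) := by
  obtain ⟨n, π, hπ⟩ := Module.Finite.exists_fin' R P
  obtain ⟨σ, hσ⟩ := Module.projective_lifting_property π (LinearMap.id) hπ
  rw [injective_iff_map_eq_zero]
  intro x hx
  by_contra hne
  have h1 : ι x ≠ 0 := fun h => hne (hι (by simpa using h))
  have h2 : σ (ι x) ≠ 0 := by
    intro h
    apply h1
    have := congrArg π h
    rw [map_zero] at this
    have := LinearMap.congr_fun hσ (ι x)
    simp only [LinearMap.comp_apply, LinearMap.id_apply] at this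
    rw [← this, ‹π (σ (ι x)) = 0›]
  obtain ⟨i, hi⟩ : ∃ i, σ (ι x) i ≠ 0 := by
    by_contra h
    push_neg at h
    exact h2 (funext h)
  obtain ⟨c, hc⟩ : ∃ c : C, (σ (ι x) i) • c ≠ 0 := by
    by_contra h
    push_neg at h
    apply hi
    apply hR
    ext c
    simpa using h c
  set f : K →ₗ[R] C := ((LinearMap.proj i).smulRight c).comp (σ.comp ι) with hf
  have : (evalMap R C K x) f = 0 := by rw [hx]; rfl
  apply hc
  simpa [hf, evalMap] using this
end

section
/- Let R be a commutative Noetherian ring, n ≥ 1, and C a finitely generated R-module. Let 0 → Y → X →^f M → 0 be a short exact sequence of finitely generated R-modules with X n-C-spherical and Cdim_R Y < n. Then f is a right approximation of M over the class of n-C-spherical modules: for every finitely generated n-C-spherical R-module X′, the map Hom_R(X′, X) → Hom_R(X′, M) induced by composition with f is surjective. In particular, Ext^1_R(X′, Y) = 0 for every finitely generated n-C-spherical R-module X′. -/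
/-!
Vanishing of `Ext^i(X', C)` for `1 ≤ i ≤ n` passes to every module in `add C`, and dimension
shifting along an `add C`-resolution `0 → D_m → ⋯ → D_0 → Y → 0` with `m < n` turns it into
`Ext^1(X', Y) = 0`. The exact sequence `Hom(X', X) → Hom(X', M) → Ext^1(X', Y)` then makes
composition with `f` surjective. Both steps are carried out on the Hom complex of a projective
resolution of `X'`.
-/

open CategoryTheory

section HomExact

variable {R : Type*} [Ring R]
  {T₀ T₁ T₂ T₃ A B D W : Type*} [AddCommGroup T₀] [Module R T₀] [AddCommGroup T₁] [Module R T₁]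
  [AddCommGroup T₂] [Module R T₂] [AddCommGroup T₃] [Module R T₃]
  [AddCommGroup A] [Module R A] [AddCommGroup B] [Module R B]
  [AddCommGroup D] [Module R D] [AddCommGroup W] [Module R W]

/-- `Hom(-, N)` carries `T₂ → T₁ → T₀` to a sequence that is exact at `Hom(T₁, N)`. -/
def HomExact (d₁ : T₁ →ₗ[R] T₀) (d₂ : T₂ →ₗ[R] T₁) (N : Type*) [AddCommGroup N] [Module R N] :
    Prop :=
  ∀ v : T₁ →ₗ[R] N, v ∘ₗ d₂ = 0 → ∃ w : T₀ →ₗ[R] N, w ∘ₗ d₁ = v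

lemma exists_comp_eq_of_injective_of_exact {i : A →ₗ[R] B} {p : B →ₗ[R] W}
    (hi : Function.Injective i) (hip : Function.Exact i p) {u : T₀ →ₗ[R] B} (hu : p ∘ₗ u = 0) :
    ∃ a : T₀ →ₗ[R] A, i ∘ₗ a = u := by
  have hmem (t : T₀) : u t ∈ LinearMap.range i := (hip (u t)).mp (LinearMap.congr_fun hu t)
  refine ⟨(LinearEquiv.ofInjective i hi).symm.toLinearMap ∘ₗ u.codRestrict _ hmem, ?_⟩
  ext t
  exact congrArg Subtype.val ((LinearEquiv.ofInjective i hi).apply_symm_apply ⟨u t, hmem t⟩)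

lemma HomExact.of_retract {d₁ : T₁ →ₗ[R] T₀} {d₂ : T₂ →ₗ[R] T₁}
    (f : D →ₗ[R] B) (g : B →ₗ[R] D) (hgf : g ∘ₗ f = LinearMap.id) (hB : HomExact d₁ d₂ B) :
    HomExact d₁ d₂ D := by
  intro v hv
  obtain ⟨w, hw⟩ := hB (f ∘ₗ v) (by rw [LinearMap.comp_assoc, hv, LinearMap.comp_zero])
  refine ⟨g ∘ₗ w, ?_⟩
  rw [LinearMap.comp_assoc, hw, ← LinearMap.comp_assoc, hgf, LinearMap.id_comp]

lemma HomExact.pi {d₁ : T₁ →ₗ[R] T₀} {d₂ : T₂ →ₗ[R] T₁} {ι : Type*} {N : ι → Type*}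
    [∀ i, AddCommGroup (N i)] [∀ i, Module R (N i)] (h : ∀ i, HomExact d₁ d₂ (N i)) :
    HomExact d₁ d₂ (∀ i, N i) := by
  intro v hv
  choose w hw using fun i ↦ h i (LinearMap.proj i ∘ₗ v)
    (by rw [LinearMap.comp_assoc, hv, LinearMap.comp_zero])
  exact ⟨LinearMap.pi w, by ext x i; exact LinearMap.congr_fun (hw i) x⟩

/-- Dimension shifting: a cocycle with values in `W` lifts to `B`; the failure of the lift to be a
cocycle is a cocycle in `A`, hence a coboundary, and correcting the lift by it gives a cocycle in
`B`, hence a coboundary. -/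
lemma exists_comp_comp_eq_of_shortExact {d₁ : T₁ →ₗ[R] T₀} {d₂ : T₂ →ₗ[R] T₁}
    {d₃ : T₃ →ₗ[R] T₂} (hd : d₂ ∘ₗ d₃ = 0) [Module.Projective R T₁]
    {i : A →ₗ[R] B} {p : B →ₗ[R] W} (hi : Function.Injective i) (hip : Function.Exact i p)
    (hp : Function.Surjective p) (hA : HomExact d₂ d₃ A) (hB : HomExact d₁ d₂ B)
    (v : T₁ →ₗ[R] W) (hv : v ∘ₗ d₂ = 0) : ∃ c : T₀ →ₗ[R] B, p ∘ₗ c ∘ₗ d₁ = v := by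
  obtain ⟨u, rfl⟩ := Module.projective_lifting_property p v hp
  obtain ⟨a, ha⟩ := exists_comp_eq_of_injective_of_exact hi hip (u := u ∘ₗ d₂)
    (by rw [← LinearMap.comp_assoc, hv])
  have ha₃ : a ∘ₗ d₃ = 0 := by
    ext x
    have h₀ : d₂ (d₃ x) = 0 := LinearMap.congr_fun hd x
    apply hi
    simpa [h₀] using LinearMap.congr_fun ha (d₃ x)
  obtain ⟨b, hb⟩ := hA a ha₃
  obtain ⟨c, hc⟩ := hB (u - i ∘ₗ b) (by
    rw [LinearMap.sub_comp, LinearMap.comp_assoc, hb, ha, sub_self])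
  refine ⟨c, ?_⟩
  rw [hc, LinearMap.comp_sub, ← LinearMap.comp_assoc, hip.linearMap_comp_eq_zero,
    LinearMap.zero_comp, sub_zero]

lemma HomExact.of_shortExact {d₁ : T₁ →ₗ[R] T₀} {d₂ : T₂ →ₗ[R] T₁}
    {d₃ : T₃ →ₗ[R] T₂} (hd : d₂ ∘ₗ d₃ = 0) [Module.Projective R T₁]
    {i : A →ₗ[R] B} {p : B →ₗ[R] W} (hi : Function.Injective i) (hip : Function.Exact i p)
    (hp : Function.Surjective p) (hA : HomExact d₂ d₃ A) (hB : HomExact d₁ d₂ B) :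
    HomExact d₁ d₂ W := by
  intro v hv
  obtain ⟨c, hc⟩ := exists_comp_comp_eq_of_shortExact hd hi hip hp hA hB v hv
  exact ⟨p ∘ₗ c, hc⟩

end HomExact

lemma HomExact.of_exact_of_surjective {R : Type*} [CommRing R] {T₀ T₁ T₂ W : Type*}
    [AddCommGroup T₀] [Module R T₀] [AddCommGroup T₁] [Module R T₁]
    [AddCommGroup T₂] [Module R T₂] [AddCommGroup W] [Module R W]
    {d₁ : T₁ →ₗ[R] T₀} {d₂ : T₂ →ₗ[R] T₁} (h : Function.Exact d₂ d₁)
    (hd₁ : Function.Surjective d₁) : HomExact d₁ d₂ W :=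
  fun v hv ↦ (LinearMap.exact_lcomp_of_exact_of_surjective W h hd₁ v).mp hv

section Ext

variable {R : Type} [CommRing R]

lemma extVanishes_succ_iff_homExact {X' : Type} [AddCommGroup X'] [Module R X'] (N : Type)
    [AddCommGroup N] [Module R N] (P : ProjectiveResolution (ModuleCat.of R X')) (j : ℕ) :
    ExtVanishes R (j + 1) X' N ↔
      HomExact (P.complex.d (j + 1) j).hom (P.complex.d (j + 2) (j + 1)).hom N := by
  rw [ExtVanishes, (P.isoExt (j + 1) (ModuleCat.of R N)).toLinearEquiv.toEquiv.subsingleton_congr,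
    ← ModuleCat.isZero_iff_subsingleton, ← HomologicalComplex.exactAt_iff_isZero_homology,
    HomologicalComplex.exactAt_iff' _ j (j + 1) (j + 2) (by simp) (by simp),
    ShortComplex.moduleCat_exact_iff]
  constructor
  · intro h v hv
    obtain ⟨w, hw⟩ := h (ModuleCat.ofHom v) (ModuleCat.hom_ext hv)
    exact ⟨w.hom, congrArg ModuleCat.Hom.hom hw⟩
  · intro h v hv
    obtain ⟨w, hw⟩ := h v.hom (congrArg ModuleCat.Hom.hom hv)
    exact ⟨ModuleCat.ofHom w, ModuleCat.hom_ext hw⟩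

variable {X' C : Type} [AddCommGroup X'] [Module R X'] [AddCommGroup C] [Module R C]

lemma ExtVanishes.of_memAddC {D : Type} [AddCommGroup D] [Module R D] {j : ℕ}
    (hC : ExtVanishes R (j + 1) X' C) (hD : MemAddC R C D) : ExtVanishes R (j + 1) X' D := by
  obtain ⟨k, f, g, hgf⟩ := hD
  rw [extVanishes_succ_iff_homExact _ (projectiveResolution _)] at hC ⊢
  exact (HomExact.pi (N := fun _ : Fin k ↦ C) fun _ ↦ hC).of_retract f g hgf

lemma ExtVanishes.of_shortExact {A B W : Type} [AddCommGroup A] [Module R A]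
    [AddCommGroup B] [Module R B] [AddCommGroup W] [Module R W]
    {i : A →ₗ[R] B} {p : B →ₗ[R] W} (hi : Function.Injective i) (hip : Function.Exact i p)
    (hp : Function.Surjective p) {j : ℕ} (hB : ExtVanishes R (j + 1) X' B)
    (hA : ExtVanishes R (j + 2) X' A) : ExtVanishes R (j + 1) X' W := by
  let P := projectiveResolution (ModuleCat.of R X')
  have := P.projective (j + 1)
  rw [extVanishes_succ_iff_homExact _ P] at hA hB ⊢
  exact HomExact.of_shortExact (congrArg ModuleCat.Hom.hom (P.complex.d_comp_d _ _ _))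
    hi hip hp hA hB

lemma surjective_comp_of_extVanishes_one {Y X M : Type} [AddCommGroup Y] [Module R Y]
    [AddCommGroup X] [Module R X] [AddCommGroup M] [Module R M]
    {ι : Y →ₗ[R] X} {f : X →ₗ[R] M} (hι : Function.Injective ι) (hexact : Function.Exact ι f)
    (hf : Function.Surjective f) (hY : ExtVanishes R 1 X' Y) :
    Function.Surjective (fun g : X' →ₗ[R] X ↦ f ∘ₗ g) := by
  let P := projectiveResolution (ModuleCat.of R X')
  have := P.projective 0
  let ε : P.complex.X 0 →ₗ[R] X' := (P.π.f 0).hom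
  have hε : Function.Surjective ε := (ModuleCat.epi_iff_surjective _).1 inferInstance
  have hexact₀ : Function.Exact (P.complex.d 1 0).hom ε :=
    (ShortComplex.ShortExact.moduleCat_exact_iff_function_exact _).mp P.exact₀
  rw [extVanishes_succ_iff_homExact _ P] at hY
  intro g
  obtain ⟨c, hc⟩ := exists_comp_comp_eq_of_shortExact
    (congrArg ModuleCat.Hom.hom (P.complex.d_comp_d 2 1 0)) hι hexact hf hY
    (HomExact.of_exact_of_surjective hexact₀ hε) (g ∘ₗ ε)
    (by rw [LinearMap.comp_assoc]
        exact (congrArg (g ∘ₗ ·) hexact₀.linearMap_comp_eq_zero).trans (LinearMap.comp_zero g))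
  exact ⟨c, (LinearMap.cancel_right hε).mp hc⟩

end Ext

section Resolution

variable {R : Type} [CommRing R] {C : Type} [AddCommGroup C] [Module R C]

lemma MemAddC.of_linearEquiv {D Y : Type} [AddCommGroup D] [Module R D] [AddCommGroup Y]
    [Module R Y] (hD : MemAddC R C D) (e : D ≃ₗ[R] Y) : MemAddC R C Y := by
  obtain ⟨k, f, g, hgf⟩ := hD
  refine ⟨k, f ∘ₗ e.symm.toLinearMap, e.toLinearMap ∘ₗ g, ?_⟩
  ext y
  have hy : g (f (e.symm y)) = e.symm y := LinearMap.congr_fun hgf (e.symm y)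
  simp [hy]

lemma HasCResolution.memAddC_of_zero {Y : Type} [AddCommGroup Y] [Module R Y]
    (h : HasCResolution R C Y 0) : MemAddC R C Y := by
  obtain ⟨D, d, ε, hadd, hsub, hε, hex₀, -⟩ := h
  have : Subsingleton (D 1) := hsub 1 zero_lt_one
  have hinj : Function.Injective ε := by
    refine (injective_iff_map_eq_zero ε).mpr fun x hx ↦ ?_
    obtain ⟨y, rfl⟩ := (hex₀ x).mp hx
    rw [Subsingleton.elim y 0, map_zero]
  exact (hadd 0 le_rfl).of_linearEquiv (LinearEquiv.ofBijective ε ⟨hinj, hε⟩)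

lemma HasCResolution.exists_ker_of_succ {Y : Type} [AddCommGroup Y] [Module R Y] {m : ℕ}
    (h : HasCResolution R C Y (m + 1)) :
    ∃ (D : ModuleCat.{0} R) (ε : D →ₗ[R] Y), MemAddC R C D ∧ Function.Surjective ε ∧
      HasCResolution R C (LinearMap.ker ε) m := by
  obtain ⟨D, d, ε, hadd, hsub, hε, hex₀, hex⟩ := h
  have hmem (x : D 1) : d 0 x ∈ LinearMap.ker ε := hex₀.apply_apply_eq_zero x
  refine ⟨D 0, ε, hadd 0 (Nat.zero_le _), hε, fun i ↦ D (i + 1), fun i ↦ d (i + 1),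
    (d 0).codRestrict _ hmem, fun i hi ↦ hadd (i + 1) (by omega),
    fun i hi ↦ hsub (i + 1) (by omega), ?_, fun x ↦ ?_, fun i ↦ hex (i + 1)⟩
  · rintro ⟨x, hx⟩
    obtain ⟨y, rfl⟩ := (hex₀ x).mp hx
    exact ⟨y, rfl⟩
  · rw [← Submodule.coe_eq_zero, LinearMap.codRestrict_apply]
    exact hex 0 x

lemma exists_hasCResolution_of_cdim_lt {Y : Type} [AddCommGroup Y] [Module R Y] {n : ℕ}
    (h : cdim R C Y < n) : ∃ m < n, HasCResolution R C Y m := by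
  obtain ⟨_, ⟨m, hm, rfl⟩, hlt⟩ := sInf_lt_iff.mp h
  exact ⟨m, Nat.cast_lt.mp hlt, hm⟩

lemma ExtVanishes.of_hasCResolution {X' Y : Type} [AddCommGroup X'] [Module R X']
    [AddCommGroup Y] [Module R Y] {m : ℕ} (hY : HasCResolution R C Y m) {j : ℕ}
    (hC : ∀ i, j < i → i ≤ j + m + 1 → ExtVanishes R i X' C) : ExtVanishes R (j + 1) X' Y := by
  induction m generalizing Y j with
  | zero => exact (hC (j + 1) (by omega) (by omega)).of_memAddC hY.memAddC_of_zero
  | succ m ih =>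
    obtain ⟨D, ε, hD, hε, hK⟩ := hY.exists_ker_of_succ
    exact .of_shortExact (LinearMap.ker ε).injective_subtype (LinearMap.exact_subtype_ker_map ε)
      hε ((hC (j + 1) (by omega) (by omega)).of_memAddC hD)
      (ih hK fun i hi₁ hi₂ ↦ hC i (by omega) (by omega))

end Resolution

theorem statement18_general (R : Type) [CommRing R]
    (n : ℕ)
    (C : Type) [AddCommGroup C] [Module R C]
    (Y : Type) [AddCommGroup Y] [Module R Y]
    (X : Type) [AddCommGroup X] [Module R X]
    (M : Type) [AddCommGroup M] [Module R M]
    (ι : Y →ₗ[R] X) (f : X →ₗ[R] M)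
    (hι : Function.Injective ι) (hexact : Function.Exact ι f) (hf : Function.Surjective f)
    (hY : cdim R C Y < (n : ℕ∞)) :
    (∀ (X' : Type) [AddCommGroup X'] [Module R X'] [Module.Finite R X'],
      IsCSpherical R C X' n →
      Function.Surjective (fun g : X' →ₗ[R] X => f.comp g)) ∧
    (∀ (X' : Type) [AddCommGroup X'] [Module R X'] [Module.Finite R X'],
      IsCSpherical R C X' n → ExtVanishes R 1 X' Y) := by
  obtain ⟨m, hmn, hm⟩ := exists_hasCResolution_of_cdim_lt hY
  have hExt (X' : Type) [AddCommGroup X'] [Module R X'] (hX' : IsCSpherical R C X' n) :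
      ExtVanishes R 1 X' Y :=
    ExtVanishes.of_hasCResolution hm (j := 0) fun i hi₁ hi₂ ↦ hX' i hi₁ (by omega)
  exact ⟨fun X' _ _ _ hX' ↦ surjective_comp_of_extVanishes_one hι hexact hf (hExt X' hX'),
    fun X' _ _ _ hX' ↦ hExt X' hX'⟩

/-- Let `0 → Y → X → M → 0` be exact with `X` `n`-`C`-spherical and `Cdim_R Y < n`. Then
`f : X → M` is a right approximation of `M` over the class of `n`-`C`-spherical modules, and
`Ext^1_R(X', Y) = 0` for every finitely generated `n`-`C`-spherical module `X'`. -/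
theorem statement18 (R : Type) [CommRing R] [IsNoetherianRing R]
    (n : ℕ) (hn : 1 ≤ n)
    (C : Type) [AddCommGroup C] [Module R C] [Module.Finite R C]
    (Y : Type) [AddCommGroup Y] [Module R Y] [Module.Finite R Y]
    (X : Type) [AddCommGroup X] [Module R X] [Module.Finite R X]
    (M : Type) [AddCommGroup M] [Module R M] [Module.Finite R M]
    (ι : Y →ₗ[R] X) (f : X →ₗ[R] M)
    (hι : Function.Injective ι) (hexact : Function.Exact ι f) (hf : Function.Surjective f)
    (hX : IsCSpherical R C X n) (hY : cdim R C Y < (n : ℕ∞)) :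
    (∀ (X' : Type) [AddCommGroup X'] [Module R X'] [Module.Finite R X'],
      IsCSpherical R C X' n →
      Function.Surjective (fun g : X' →ₗ[R] X => f.comp g)) ∧
    (∀ (X' : Type) [AddCommGroup X'] [Module R X'] [Module.Finite R X'],
      IsCSpherical R C X' n → ExtVanishes R 1 X' Y) :=
  statement18_general R n C Y X M ι f hι hexact hf hY
end
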